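/- arXiv:math/0109201 — 4 statements merged into one kernel-verified Lean document; each statement's English description precedes it below -/
import Mathlib

section
/- For every n ∈ ℕ and all real numbers a, b, c, y one has (y + c²)·S_n(y; a, b, c+1) = (n+a+c)(n+b+c)·S_n(y; a, b, c) − S_{n+1}(y; a, b, c). (In the orthonormal normalization this is the contiguous relation ((c²+y)/√((a+c)(b+c))) Ŝ_n(y; a, b, c+1) = √((n+1)(a+b+n)) Ŝ_{n+1}(y; a, b, c) + √((a+c+n)(b+c+n)) Ŝ_n(y; a, b, c).) -/
open Finset

/-- Pochhammer symbol `(q)_m = q(q+1)⋯(q+m−1)` for a real `q`. -/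
noncomputable def poch (q : ℝ) (m : ℕ) : ℝ := ∏ l ∈ Finset.range m, (q + l)

/-- The continuous dual Hahn polynomial
`S_n(y; a, b, c) = ∑_{j=0}^n (−1)^j (n choose j) (a+b+j)_{n−j} (a+c+j)_{n−j}
  ∏_{l=0}^{j−1} ((a+l)² + y)`. -/
noncomputable def cdHahn (n : ℕ) (y a b c : ℝ) : ℝ :=
  ∑ j ∈ Finset.range (n + 1),
    (-1 : ℝ) ^ j * (n.choose j : ℝ) * poch (a + b + j) (n - j) * poch (a + c + j) (n - j) *
      ∏ l ∈ Finset.range j, ((a + l) ^ 2 + y)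

/-!
Expand `S_n(y; a, b, c) = ∑_j α_j P_j` in the basis `P_j = ∏_{l<j} ((a+l)² + y)`. Since
`(y + c²) P_j = P_{j+1} - ((a+j)² - c²) P_j`, multiplication by `y + c²` shifts the coefficients
by one and rescales them, so the relation reduces to one identity between the coefficients of
`P_j` for each `j`. After the two Pochhammer recurrences `(q)_{m+1} = (q)_m (q+m) = q (q+1)_m`
that identity is Pascal's rule together with `(k+1) C(n, k+1) = (n-k) C(n, k)`.
-/

lemma poch_succ (q : ℝ) (m : ℕ) : poch q (m + 1) = poch q m * (q + m) :=
  prod_range_succ _ _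

lemma poch_succ' (q : ℝ) (m : ℕ) : poch q (m + 1) = q * poch (q + 1) m := by
  rw [poch, prod_range_succ', Nat.cast_zero, add_zero, mul_comm]
  congr 1
  exact prod_congr rfl fun l _ => by push_cast; ring

lemma poch_mul_add (q : ℝ) (m : ℕ) : poch q m * (q + m) = q * poch (q + 1) m := by
  rw [← poch_succ, poch_succ']

noncomputable def cdHahnCoeff (n : ℕ) (a b c : ℝ) (j : ℕ) : ℝ :=
  (-1) ^ j * (n.choose j : ℝ) * poch (a + b + j) (n - j) * poch (a + c + j) (n - j)

noncomputable def cdHahnBasis (a y : ℝ) (j : ℕ) : ℝ :=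
  ∏ l ∈ range j, ((a + l) ^ 2 + y)

lemma cdHahn_eq_sum (n : ℕ) (y a b c : ℝ) :
    cdHahn n y a b c = ∑ j ∈ range (n + 1), cdHahnCoeff n a b c j * cdHahnBasis a y j :=
  rfl

lemma cdHahnBasis_succ (a y : ℝ) (j : ℕ) :
    cdHahnBasis a y (j + 1) = ((a + j) ^ 2 + y) * cdHahnBasis a y j := by
  simp only [cdHahnBasis, prod_range_succ, mul_comm]

lemma cdHahnCoeff_self (n : ℕ) (a b c : ℝ) : cdHahnCoeff n a b c n = (-1) ^ n := by
  simp [cdHahnCoeff, poch]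

lemma cdHahnCoeff_contiguous_zero (n : ℕ) (a b c : ℝ) :
    cdHahnCoeff (n + 1) a b c 0 =
      (n + a + c) * (n + b + c) * cdHahnCoeff n a b c 0 +
        (a ^ 2 - c ^ 2) * cdHahnCoeff n a b (c + 1) 0 := by
  simp only [cdHahnCoeff, pow_zero, Nat.choose_zero_right, Nat.cast_zero, Nat.cast_one,
    add_zero, Nat.sub_zero, one_mul, poch_succ (a + b), poch_succ' (a + c)]
  linear_combination (norm := ring_nf) (-(n + b + c) * poch (a + b) n) * poch_mul_add (a + c) n

lemma cdHahnCoeff_contiguous_succ {n k : ℕ} (hk : k < n) (a b c : ℝ) :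
    cdHahnCoeff (n + 1) a b c (k + 1) =
      (n + a + c) * (n + b + c) * cdHahnCoeff n a b c (k + 1) +
        ((a + (k + 1 : ℕ)) ^ 2 - c ^ 2) * cdHahnCoeff n a b (c + 1) (k + 1) -
          cdHahnCoeff n a b (c + 1) k := by
  obtain ⟨m, rfl⟩ : ∃ m, n = k + 1 + m := ⟨n - (k + 1), by omega⟩
  have hchoose :
      ((k + 1 + m).choose (k + 1) : ℝ) * (k + 1) = ((k + 1 + m).choose k) * (m + 1) := by
    have h := Nat.choose_succ_right_eq (k + 1 + m) k
    rw [show k + 1 + m - k = m + 1 by omega] at h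
    exact_mod_cast h
  simp only [cdHahnCoeff, Nat.choose_succ_succ' (k + 1 + m) k,
    show k + 1 + m - (k + 1) = m by omega, show k + 1 + m - k = m + 1 by omega,
    show k + 1 + m + 1 - (k + 1) = m + 1 by omega]
  push_cast
  rw [poch_succ (a + b + (k + 1)), poch_succ' (a + c + (k + 1)), poch_succ' (a + b + k),
    poch_succ' (a + (c + 1) + k)]
  linear_combination (norm := ring_nf)
    ((-1) ^ k * (k + 1 + m + b + c) * ((k + 1 + m).choose (k + 1) : ℝ) *
        poch (a + b + (k + 1)) m) * poch_mul_add (a + c + (k + 1)) m +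
      ((-1) ^ k * (a + c + k + 1) * poch (a + b + (k + 1)) m * poch (a + c + (k + 1) + 1) m) *
        hchoose

-- The `j`-th term is `w_j - w_{j-1}` with `w_j = α_j P_{j+1}` (where `α` is the coefficient
-- sequence at `c + 1`) and `w_{-1} = 0`.
lemma sum_cdHahnCoeff_contiguous_telescope (n : ℕ) (a b c y : ℝ) :
    ∑ j ∈ range (n + 1),
        ((y + c ^ 2) * cdHahnCoeff n a b (c + 1) j + cdHahnCoeff (n + 1) a b c j -
          (n + a + c) * (n + b + c) * cdHahnCoeff n a b c j) * cdHahnBasis a y j =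
      cdHahnCoeff n a b (c + 1) n * cdHahnBasis a y (n + 1) := by
  set A := ((n : ℝ) + a + c) * ((n : ℝ) + b + c)
  set α := cdHahnCoeff n a b (c + 1)
  set β := cdHahnCoeff n a b c
  set γ := cdHahnCoeff (n + 1) a b c
  set P := cdHahnBasis a y
  have hP (j : ℕ) : P (j + 1) = ((a + j) ^ 2 + y) * P j := cdHahnBasis_succ a y j
  have hγ₀ : γ 0 = A * β 0 + (a ^ 2 - c ^ 2) * α 0 := cdHahnCoeff_contiguous_zero n a b c
  have hγ (k : ℕ) (hk : k < n) :
      γ (k + 1) = A * β (k + 1) + ((a + (k + 1 : ℕ)) ^ 2 - c ^ 2) * α (k + 1) - α k :=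
    cdHahnCoeff_contiguous_succ hk a b c
  rw [sum_range_succ', eq_sum_range_sub (fun k => α k * P (k + 1)) n, add_comm]
  congr 1
  · rw [hγ₀, hP 0]; push_cast; ring
  · refine sum_congr rfl fun k hk => ?_
    rw [hγ k (mem_range.mp hk), hP (k + 1)]; ring

/-- Contiguous relation for the continuous dual Hahn polynomials:
`(y + c²)·S_n(y; a, b, c+1) = (n+a+c)(n+b+c)·S_n(y; a, b, c) − S_{n+1}(y; a, b, c)`. -/
theorem cdHahn_contiguous_up (n : ℕ) (a b c y : ℝ) :
    (y + c ^ 2) * cdHahn n y a b (c + 1) =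
      ((n : ℝ) + a + c) * ((n : ℝ) + b + c) * cdHahn n y a b c - cdHahn (n + 1) y a b c := by
  have htel := sum_cdHahnCoeff_contiguous_telescope n a b c y
  simp only [add_mul, sub_mul, sum_add_distrib, sum_sub_distrib, mul_assoc, ← mul_sum] at htel
  have htop : cdHahnCoeff (n + 1) a b c (n + 1) = -cdHahnCoeff n a b (c + 1) n := by
    rw [cdHahnCoeff_self, cdHahnCoeff_self, pow_succ, mul_neg_one]
  rw [cdHahn_eq_sum, cdHahn_eq_sum, cdHahn_eq_sum, sum_range_succ _ (n + 1), htop]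
  linear_combination htel
end

section
/- For every integer n ≥ 1 and all real numbers a, b, c, y one has S_n(y; a, b, c−1) = S_n(y; a, b, c) − n(n+a+b−1)·S_{n−1}(y; a, b, c). (In the orthonormal normalization this is the companion contiguous relation √((a+c−1)(b+c−1)) Ŝ_n(y; a, b, c−1) = √((n+a+c−1)(n+b+c−1)) Ŝ_n(y; a, b, c) + √(n(n+a+b−1)) Ŝ_{n−1}(y; a, b, c).) -/
/-!
The relation holds summand by summand. For `j < n` put `k = n - 1 - j` and `q = a + c + j`;
then `(q - 1)_{k+1} = (q)_{k+1} - (k + 1) (q)_k`, `(k + 1) C(n, j) = n C(n - 1, j)` and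
`(a + b + j)_{k+1} = (a + b + j)_k (n + a + b - 1)`, which is the relation for the `j`-th summands.
The summands with `j = n` do not involve `c`.
-/

open Finset

lemma poch_zero (q : ℝ) : poch q 0 = 1 := by
  simp [poch]

lemma poch_sub_one_succ (q : ℝ) (m : ℕ) :
    poch (q - 1) (m + 1) = poch q (m + 1) - (m + 1) * poch q m := by
  rw [poch_succ', sub_add_cancel, poch_succ]
  ring

noncomputable def cdHahnTerm (n : ℕ) (y a b c : ℝ) (j : ℕ) : ℝ :=
  (-1 : ℝ) ^ j * (n.choose j : ℝ) * poch (a + b + j) (n - j) * poch (a + c + j) (n - j) *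
    ∏ l ∈ range j, ((a + l) ^ 2 + y)

lemma cdHahn_eq_sum_cdHahnTerm (n : ℕ) (y a b c : ℝ) :
    cdHahn n y a b c = ∑ j ∈ range (n + 1), cdHahnTerm n y a b c j :=
  rfl

lemma cdHahnTerm_self (n : ℕ) (y a b c : ℝ) :
    cdHahnTerm n y a b c n = (-1 : ℝ) ^ n * ∏ l ∈ range n, ((a + l) ^ 2 + y) := by
  simp [cdHahnTerm, poch_zero]

lemma cdHahnTerm_contiguous_down {m j : ℕ} (hj : j ≤ m) (y a b c : ℝ) :
    cdHahnTerm (m + 1) y a b (c - 1) j =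
      cdHahnTerm (m + 1) y a b c j - (m + 1) * (m + a + b) * cdHahnTerm m y a b c j := by
  obtain ⟨k, rfl⟩ : ∃ k, m = j + k := ⟨m - j, by omega⟩
  have hC : ((j + k + 1).choose j : ℝ) * (k + 1) = (j + k).choose j * (j + k + 1) := by
    have h := Nat.choose_mul_succ_eq (j + k) j
    rw [show j + k + 1 - j = k + 1 by omega] at h
    exact_mod_cast h.symm
  simp only [cdHahnTerm, show j + k + 1 - j = k + 1 by omega, show j + k - j = k by omega,
    show a + (c - 1) + j = a + c + j - 1 by ring, poch_sub_one_succ, poch_succ (a + b + j) k]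
  push_cast
  linear_combination (-((-1 : ℝ) ^ j * poch (a + b + j) k * poch (a + c + j) k *
    (∏ l ∈ range j, ((a + l) ^ 2 + y)) * (a + b + j + k))) * hC

theorem cdHahn_contiguous_down_general (n : ℕ) (a b c y : ℝ) :
    cdHahn n y a b (c - 1) =
      cdHahn n y a b c - (n : ℝ) * ((n : ℝ) + a + b - 1) * cdHahn (n - 1) y a b c := by
  cases n with
  | zero => simp [cdHahn, poch_zero]
  | succ m =>
    simp only [cdHahn_eq_sum_cdHahnTerm, Nat.add_sub_cancel, sum_range_succ _ (m + 1),
      cdHahnTerm_self]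
    rw [sum_congr rfl fun j hj =>
      cdHahnTerm_contiguous_down (Nat.lt_succ_iff.mp (mem_range.mp hj)) y a b c, sum_sub_distrib,
      ← mul_sum]
    push_cast
    ring

/-- The companion contiguous relation:
`S_n(y; a, b, c−1) = S_n(y; a, b, c) − n(n+a+b−1)·S_{n−1}(y; a, b, c)` for `n ≥ 1`. -/
theorem cdHahn_contiguous_down (n : ℕ) (hn : 1 ≤ n) (a b c y : ℝ) :
    cdHahn n y a b (c - 1) =
      cdHahn n y a b c - (n : ℝ) * ((n : ℝ) + a + b - 1) * cdHahn (n - 1) y a b c :=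
  cdHahn_contiguous_down_general n a b c y
end

section
/- For all n, p ∈ ℕ with p ≤ n and all real numbers a, b, y one has S_n(y; a, b, 1−a−p) = (−1)^p · [∏_{j=0}^{p−1} ((a+j)² + y)] · S_{n−p}(y; a+p, b, 1−a). (With a = k₁−k₂+1/2 and b = k₁+k₂−1/2 this is the parameter-shift identity used in the proof of the bilinear generating function for Meixner polynomials, relating S_n(y; k₁−k₂+1/2, k₁+k₂−1/2, k₂−k₁−p+1/2) to S_{n−p}(y; k₁−k₂+p+1/2, k₁+k₂−1/2, k₂−k₁+1/2).) -/
/-!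
For `j < p` the factor `(1 - p + j)_{n-j}` of the `j`-th term of `S_n(y; a, b, 1-a-p)` contains
the factor `0`, so only the terms `j = p + i` survive. In these, `∏_{l<p+i} ((a+l)² + y)` splits
off `∏_{l<p} ((a+l)² + y)`, and the remaining coefficients match those of `S_{n-p}(y; a+p, b, 1-a)`
by the factorial identity `C(n, p+i) (n-p)!/i! = C(n-p, i) n!/(p+i)!`.
-/

open Finset

open scoped Nat

lemma poch_eq_zero_of_add_natCast_eq_zero {q : ℝ} {k m : ℕ} (hkm : k < m) (hq : q + k = 0) :
    poch q m = 0 :=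
  prod_eq_zero (mem_range.2 hkm) hq

lemma poch_natCast_add_one (m k : ℕ) : poch (m + 1) k = (m + k)! / m ! := by
  rw [eq_div_iff (by positivity), ← Nat.factorial_mul_ascFactorial, Nat.ascFactorial_eq_prod_range,
    poch]
  push_cast
  ring

lemma choose_mul_poch_eq (p m i : ℕ) (him : i ≤ m) :
    ((p + m).choose (p + i) : ℝ) * poch (i + 1) (m - i) =
      (m.choose i : ℝ) * poch ((p + i : ℕ) + 1) (m - i) := by
  rw [poch_natCast_add_one, poch_natCast_add_one, Nat.cast_choose ℝ (by omega : p + i ≤ p + m),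
    Nat.cast_choose ℝ him, Nat.add_sub_add_left, Nat.add_sub_cancel' him,
    show p + i + (m - i) = p + m by omega]
  field_simp

lemma prod_range_add_sq_add (a y : ℝ) (p i : ℕ) :
    ∏ l ∈ range (p + i), ((a + l) ^ 2 + y) =
      (∏ l ∈ range p, ((a + l) ^ 2 + y)) * ∏ l ∈ range i, ((a + p + l) ^ 2 + y) := by
  rw [prod_range_add]
  push_cast
  simp only [add_assoc]

/-- Parameter-shift identity for continuous dual Hahn polynomials: for `p ≤ n`,
`S_n(y; a, b, 1−a−p) = (−1)^p · ∏_{j=0}^{p−1} ((a+j)² + y) · S_{n−p}(y; a+p, b, 1−a)`. -/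
theorem cdHahn_shift (n p : ℕ) (hpn : p ≤ n) (a b y : ℝ) :
    cdHahn n y a b (1 - a - p) =
      (-1 : ℝ) ^ p * (∏ j ∈ Finset.range p, ((a + j) ^ 2 + y)) *
        cdHahn (n - p) y (a + p) b (1 - a) := by
  obtain ⟨m, rfl⟩ := Nat.exists_eq_add_of_le hpn
  have low_terms_vanish : ∀ j ∈ range p,
      poch (a + (1 - a - p) + j) (p + m - j) = 0 := fun j hj => by
    obtain ⟨r, rfl⟩ := Nat.exists_eq_add_of_lt (mem_range.1 hj)
    exact poch_eq_zero_of_add_natCast_eq_zero (k := r) (by omega) (by push_cast; ring)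
  rw [cdHahn, cdHahn, Nat.add_sub_cancel_left, add_assoc, sum_range_add,
    sum_eq_zero fun j hj => by rw [low_terms_vanish j hj]; ring, zero_add, mul_sum]
  refine sum_congr rfl fun i hi => ?_
  have hcoeff := choose_mul_poch_eq p m i (Nat.lt_succ_iff.1 (mem_range.1 hi))
  rw [Nat.add_sub_add_left, prod_range_add_sq_add, pow_add,
    show a + (1 - a - p) + ((p + i : ℕ) : ℝ) = i + 1 by push_cast; ring,
    show a + p + (1 - a) + (i : ℝ) = ((p + i : ℕ) : ℝ) + 1 by push_cast; ring,
    show a + b + ((p + i : ℕ) : ℝ) = a + p + b + i by push_cast; ring]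
  linear_combination ((-1 : ℝ) ^ p * (-1) ^ i * poch (a + p + b + i) (m - i) *
    (∏ l ∈ range p, ((a + l) ^ 2 + y)) * ∏ l ∈ range i, ((a + p + l) ^ 2 + y)) * hcoeff
end

section
/- Let a, b, t ∈ ℂ with 0 < |t| < 1 and let r ∈ ℤ; if r < 0 assume additionally that a+j ≠ 0 and b+j ≠ 0 for all integers j with r ≤ j ≤ −1. Then both series below converge absolutely and ∑_{k=0}^∞ (a)_k (b)_k t^k/(k! Γ(1−r+k)) = (a)_r (b)_r t^r ∑_{p=0}^∞ (a+r)_p (b+r)_p t^p/(p! Γ(1+r+p)), where for r ≥ 0 one sets (q)_r = q(q+1)⋯(q+r−1) and for r < 0 one sets (q)_r = 1/((q+r)(q+r+1)⋯(q−1)), and 1/Γ is interpreted as 0 at non-positive integers. Equivalently, in terms of the regularized Gauss hypergeometric series, ₂F₁(a, b; 1−r; t)/Γ(1−r) = (Γ(a+r)Γ(b+r)/(Γ(a)Γ(b))) · (t^r/Γ(1+r)) · ₂F₁(a+r, b+r; 1+r; t) for integer r. -/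
open Finset Complex

/-- Pochhammer symbol `(q)_k = q(q+1)⋯(q+k−1)` for `q ∈ ℂ` and `k ∈ ℕ`. -/
noncomputable def cpoch (q : ℂ) (k : ℕ) : ℂ := ∏ i ∈ Finset.range k, (q + i)

/-- Pochhammer symbol with integer index: for `r ≥ 0`, `(q)_r = q(q+1)⋯(q+r−1)`, and for
`r < 0`, `(q)_r = 1/((q+r)(q+r+1)⋯(q−1))`. -/
noncomputable def zpoch (q : ℂ) (r : ℤ) : ℂ :=
  if 0 ≤ r then ∏ i ∈ Finset.range r.toNat, (q + i)
  else (∏ i ∈ Finset.range (-r).toNat, (q + r + i))⁻¹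

/-! For `r = n ≥ 0` the first `n` terms of the left series vanish, since `1/Γ(1 - n + k) = 0` for
`k < n`; reindexing by `k = p + n` and splitting `(a)_{p+n} = (a)_n (a+n)_p` gives the identity.
For `r = -n < 0` the same identity, applied to `a - n` and `b - n`, is solved for the other side,
which requires `(a-n)_n (b-n)_n t^n ≠ 0`. Both series are Mathlib's regularized Gauss series, whose
radius of convergence is at least `1`. -/

open Nat

theorem cpoch_eq_eval_ascPochhammer (q : ℂ) (k : ℕ) :
    cpoch q k = (ascPochhammer ℂ k).eval q := by
  induction k with
  | zero => simp [cpoch]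
  | succ k ih => rw [cpoch, prod_range_succ, ← cpoch, ih, ascPochhammer_succ_eval]

theorem cpoch_add (q : ℂ) (m k : ℕ) : cpoch q (m + k) = cpoch q m * cpoch (q + m) k := by
  simp only [cpoch, prod_range_add, Nat.cast_add, add_assoc]

theorem zpoch_natCast (q : ℂ) (n : ℕ) : zpoch q n = cpoch q n := by
  simp [zpoch, cpoch]

theorem zpoch_neg_natCast (q : ℂ) (n : ℕ) : zpoch q (-n) = (cpoch (q - n) n)⁻¹ := by
  obtain rfl | hn := n.eq_zero_or_pos
  · simp [zpoch, cpoch]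
  · simp [zpoch, cpoch, hn.ne', sub_eq_add_neg]

theorem cpoch_sub_natCast_ne_zero {q : ℂ} {n : ℕ}
    (h : ∀ j : ℤ, -n ≤ j → j ≤ -1 → q + j ≠ 0) : cpoch (q - n) n ≠ 0 :=
  prod_ne_zero_iff.mpr fun i hi => by
    have hi : i < n := mem_range.mp hi
    simpa [sub_add_eq_add_sub, add_sub_assoc] using h (i - n) (by omega) (by omega)

theorem regularizedGaussHGFunSeries_apply (a b c t : ℂ) (k : ℕ) :
    regularizedGaussHGFunSeries a b c k (fun _ => t) =
      cpoch a k * cpoch b k * t ^ k / (k ! * Gamma (c + k)) := by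
  rw [FormalMultilinearSeries.apply_eq_pow_smul_coeff, coeff_regularizedGaussHGFunSeries,
    cpoch_eq_eval_ascPochhammer, cpoch_eq_eval_ascPochhammer, smul_eq_mul]
  ring

theorem regularizedGaussHGFun_eq_tsum (a b c t : ℂ) :
    regularizedGaussHGFun a b c t =
      ∑' k : ℕ, cpoch a k * cpoch b k * t ^ k / (k ! * Gamma (c + k)) := by
  simp only [regularizedGaussHGFun, FormalMultilinearSeries.sum, regularizedGaussHGFunSeries_apply]

theorem summable_norm_regularizedGaussHGFunSeries_apply (a b c : ℂ) {t : ℂ} (ht : ‖t‖ < 1) :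
    Summable fun k : ℕ => ‖regularizedGaussHGFunSeries a b c k (fun _ => t)‖ := by
  refine FormalMultilinearSeries.summable_norm_apply _ ?_
  rw [mem_eball_zero_iff]
  exact (by simpa [← ofReal_norm] using ht : ‖t‖ₑ < 1).trans_le
    (radius_regularizedGaussHGFunSeries_ge_one a b c)

theorem Gamma_one_sub_natCast_add_natCast_of_lt {k n : ℕ} (h : k < n) :
    Gamma (1 - n + k) = 0 := by
  have : (1 : ℂ) - n + k = -((n - (k + 1) : ℕ) : ℂ) := by
    rw [Nat.cast_sub h]
    push_cast
    ring
  rw [this, Gamma_neg_nat_eq_zero]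

theorem regularizedGaussHGFunSeries_one_sub_natCast_apply_add (a b t : ℂ) (n p : ℕ) :
    regularizedGaussHGFunSeries a b (1 - n) (p + n) (fun _ => t) =
      cpoch a n * cpoch b n * t ^ n *
        regularizedGaussHGFunSeries (a + n) (b + n) (1 + n) p (fun _ => t) := by
  have h₁ : (1 : ℂ) - n + ((p + n : ℕ) : ℂ) = p + 1 := by push_cast; ring
  have h₂ : (1 : ℂ) + n + p = ((n + p : ℕ) : ℂ) + 1 := by push_cast; ring
  rw [regularizedGaussHGFunSeries_apply, regularizedGaussHGFunSeries_apply, h₁, h₂,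
    Gamma_nat_eq_factorial, Gamma_nat_eq_factorial, add_comm p n, cpoch_add, cpoch_add, pow_add]
  ring

theorem regularizedGaussHGFun_one_sub_natCast (a b t : ℂ) (n : ℕ) :
    regularizedGaussHGFun a b (1 - n) t =
      cpoch a n * cpoch b n * t ^ n * regularizedGaussHGFun (a + n) (b + n) (1 + n) t := by
  have hsupp : Function.support (fun k => regularizedGaussHGFunSeries a b (1 - n) k (fun _ => t))
      ⊆ Set.range (· + n) := by
    intro k hk
    by_contra hkn
    have hlt : k < n := by
      by_contra! h
      exact hkn ⟨k - n, Nat.sub_add_cancel h⟩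
    exact hk (by simp only [regularizedGaussHGFunSeries_apply,
      Gamma_one_sub_natCast_add_natCast_of_lt hlt, mul_zero, div_zero])
  simp only [regularizedGaussHGFun, FormalMultilinearSeries.sum,
    ← (add_left_injective n).tsum_eq hsupp, regularizedGaussHGFunSeries_one_sub_natCast_apply_add,
    tsum_mul_left]

/-- The index-shift identity for the regularized Gauss hypergeometric series: for
`a, b, t ∈ ℂ` with `0 < |t| < 1` and `r ∈ ℤ` (assuming for `r < 0` that `a+j ≠ 0 ≠ b+j`
for `r ≤ j ≤ −1`), both series converge absolutely and
`∑_{k=0}^∞ (a)_k (b)_k t^k/(k! Γ(1−r+k))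
  = (a)_r (b)_r t^r ∑_{p=0}^∞ (a+r)_p (b+r)_p t^p/(p! Γ(1+r+p))`,
i.e. `₂F₁(a,b;1−r;t)/Γ(1−r) = (Γ(a+r)Γ(b+r)/(Γ(a)Γ(b)))·(t^r/Γ(1+r))·₂F₁(a+r,b+r;1+r;t)`,
with `1/Γ` interpreted as `0` at non-positive integers. -/
theorem regularized_hypergeometric_shift (a b t : ℂ) (ht0 : 0 < ‖t‖)
    (ht1 : ‖t‖ < 1) (r : ℤ)
    (ha : ∀ j : ℤ, r ≤ j → j ≤ -1 → a + j ≠ 0)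
    (hb : ∀ j : ℤ, r ≤ j → j ≤ -1 → b + j ≠ 0) :
    Summable (fun k : ℕ => ‖(cpoch a k * cpoch b k * t ^ k /
      ((k.factorial : ℂ) * Complex.Gamma (1 - r + k)))‖) ∧
    Summable (fun p : ℕ => ‖(cpoch (a + r) p * cpoch (b + r) p * t ^ p /
      ((p.factorial : ℂ) * Complex.Gamma (1 + r + p)))‖) ∧
    ∑' k : ℕ, cpoch a k * cpoch b k * t ^ k /
        ((k.factorial : ℂ) * Complex.Gamma (1 - r + k)) =
      zpoch a r * zpoch b r * t ^ r *
        ∑' p : ℕ, cpoch (a + r) p * cpoch (b + r) p * t ^ p /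
          ((p.factorial : ℂ) * Complex.Gamma (1 + r + p)) := by
  refine ⟨by simpa only [regularizedGaussHGFunSeries_apply] using
      summable_norm_regularizedGaussHGFunSeries_apply a b (1 - r) ht1,
    by simpa only [regularizedGaussHGFunSeries_apply] using
      summable_norm_regularizedGaussHGFunSeries_apply (a + r) (b + r) (1 + r) ht1, ?_⟩
  simp only [← regularizedGaussHGFun_eq_tsum]
  obtain ⟨n, rfl | rfl⟩ := Int.eq_nat_or_neg r
  · simpa [zpoch_natCast] using regularizedGaussHGFun_one_sub_natCast a b t n
  · have hshift := regularizedGaussHGFun_one_sub_natCast (a - n) (b - n) t n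
    have hPa := cpoch_sub_natCast_ne_zero ha
    have hPb := cpoch_sub_natCast_ne_zero hb
    have ht : t ≠ 0 := norm_pos_iff.mp ht0
    simp only [sub_add_cancel] at hshift
    push_cast
    simp only [← sub_eq_add_neg, sub_neg_eq_add]
    rw [zpoch_neg_natCast, zpoch_neg_natCast, zpow_neg, zpow_natCast, hshift]
    field_simp
end
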